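/- Let (W,S) be a right-angled Coxeter system, g ∈ W, and suppose γ1++γ2 is a reduced word for g. Then for every s ∈ B(g), either s ∈ lett(γ2) or s commutes in W with every element of lett(γ2) (i.e., s ∈ lk(lett(γ2))). -/

import Mathlib

/-!
Peel the letters of `γ₂` off from the right. If `s` is not the last letter `c`, then `s` and `c`
are distinct right descents of `g`; in a right-angled Coxeter group this forces `m(s, c) = 2`,
and `s` is still a right descent of `g c`, so induction applies to the shorter word.

Both facts come from the exchange property, proved here through the action of `W` on
`W × ZMod 2` that records, for each reflection, the parity of its number of occurrences in the
right inversion sequence of a word. If `m(a, b) = ∞` and `a`, `b` are right descents of `w`,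
repeated exchange gives `ℓ(w · x) = ℓ(w) - k` for the alternating word `x` of every length `k`,
which is absurd. The exchange never deletes a letter of `x`, because alternating words in `a`, `b`
are reduced: under `a ↦ (n ↦ -1 - n)`, `b ↦ (n ↦ 1 - n)` (other generators acting trivially) a
word of length `k` moves `0` by at most `k`, and the alternating one by exactly `k`.
-/

/-- A Coxeter matrix is right-angled if all off-diagonal entries are `2` or `0`
(where `0` encodes `∞`). -/
def CoxeterMatrix.IsRightAngled {B : Type*} (M : CoxeterMatrix B) : Prop :=
  ∀ i j : B, i ≠ j → M i j = 2 ∨ M i j = 0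

theorem CoxeterMatrix.IsRightAngled.isLiftable {B G : Type*} [Monoid G] {M : CoxeterMatrix B}
    (hra : M.IsRightAngled) {f : B → G} (hsq : ∀ i, f i * f i = 1)
    (hcomm : ∀ i j, M i j = 2 → Commute (f i) (f j)) : M.IsLiftable f := by
  intro i j
  rcases eq_or_ne i j with rfl | hij
  · rw [M.diagonal, pow_one, hsq]
  · rcases hra i j hij with h | h
    · rw [h, sq, (hcomm i j h).symm.mul_mul_mul_comm, hsq, hsq, one_mul]
    · rw [h, pow_zero]

section ConjToggle

variable {G : Type*} [Group G]

theorem mul_mul_eq_iff_of_mul_self {r t u : G} (hr : r * r = 1) :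
    r * t * r = u ↔ t = r * u * r := by
  have hconj : ∀ x : G, r * (r * x * r) * r = x := fun x => by
    rw [show r * (r * x * r) * r = r * r * x * (r * r) by group, hr, one_mul, mul_one]
  constructor <;> rintro rfl
  exacts [(hconj t).symm, hconj u]

theorem Commute.mul_mul_eq_iff_of_mul_self {r t u : G} (hc : Commute r u) (hr : r * r = 1) :
    r * t * r = u ↔ t = u := by
  rw [_root_.mul_mul_eq_iff_of_mul_self hr, hc.eq, mul_assoc, hr, mul_one]

variable [DecidableEq G]

def conjToggle (r : G) (hr : r * r = 1) : Equiv.Perm (G × ZMod 2) :=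
  Function.Involutive.toPerm (fun x => (r * x.1 * r, x.2 + if x.1 = r then 1 else 0)) <| by
    rintro ⟨t, ε⟩
    ext
    · exact (mul_mul_eq_iff_of_mul_self hr).mpr rfl
    · simp only [(Commute.refl r).mul_mul_eq_iff_of_mul_self hr, add_assoc,
        ZModModule.add_self, add_zero]

theorem conjToggle_apply (r : G) (hr : r * r = 1) (t : G) (ε : ZMod 2) :
    conjToggle r hr (t, ε) = (r * t * r, ε + if t = r then 1 else 0) := rfl

theorem conjToggle_mul_self (r : G) (hr : r * r = 1) : conjToggle r hr * conjToggle r hr = 1 :=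
  Equiv.ext (conjToggle r hr).left_inv

theorem conjToggle_commute {r r' : G} (hr : r * r = 1) (hr' : r' * r' = 1) (hc : Commute r r') :
    Commute (conjToggle r hr) (conjToggle r' hr') := by
  refine Equiv.ext fun ⟨t, ε⟩ => ?_
  simp only [Equiv.Perm.mul_apply, conjToggle_apply, hc.mul_mul_eq_iff_of_mul_self hr,
    hc.symm.mul_mul_eq_iff_of_mul_self hr']
  refine Prod.ext ?_ (add_right_comm _ _ _)
  calc r * (r' * t * r') * r = r * r' * t * (r' * r) := by group
    _ = r' * r * t * (r * r') := by rw [hc.eq]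
    _ = r' * (r * t * r) * r' := by group

end ConjToggle

namespace CoxeterSystem

open List

variable {B W : Type*} [Group W] {M : CoxeterMatrix B} (cs : CoxeterSystem M W)

local prefix:100 "s" => cs.simple
local prefix:100 "π" => cs.wordProd
local prefix:100 "ℓ" => cs.length
local prefix:100 "ris" => cs.rightInvSeq

theorem commute_simple_of_eq_two {i j : B} (h : M i j = 2) : Commute (s i) (s j) := by
  have hsq := cs.simple_mul_simple_pow i j
  rw [h, sq] at hsq
  rw [Commute, SemiconjBy, eq_inv_of_mul_eq_one_left hsq, mul_inv_rev, inv_simple, inv_simple]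

theorem isRightDescent_wordProd_append_singleton {ω : List B} {i : B}
    (hω : cs.IsReduced (ω ++ [i])) :
    cs.IsRightDescent (π (ω ++ [i])) i := by
  rw [IsRightDescent, hω.eq, wordProd_append, wordProd_singleton, simple_mul_simple_cancel_right,
    length_append, length_singleton]
  exact Nat.lt_succ_of_le (cs.length_wordProd_le ω)

variable {cs}

theorem IsReduced.of_append_left {ω ω' : List B} (h : cs.IsReduced (ω ++ ω')) :
    cs.IsReduced ω := by
  simpa using h.take ω.length

section ParityRep

variable (cs) [DecidableEq W]

def parityRep (hra : M.IsRightAngled) : W →* Equiv.Perm (W × ZMod 2) :=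
  cs.lift ⟨fun i => conjToggle (s i) (cs.simple_mul_simple_self i),
    hra.isLiftable (fun _ => conjToggle_mul_self _ _)
      (fun _ _ h => conjToggle_commute _ _ (cs.commute_simple_of_eq_two h))⟩

theorem parityRep_wordProd_apply (hra : M.IsRightAngled) (ω : List B) (t : W) (ε : ZMod 2) :
    cs.parityRep hra (π ω) (t, ε) = (π ω * t * (π ω)⁻¹, ε + ((ris ω).count t : ZMod 2)) := by
  induction ω generalizing t ε with
  | nil => simp [rightInvSeq]
  | cons i ω ih =>
    rw [wordProd_cons, map_mul, Equiv.Perm.mul_apply, ih, parityRep, lift_apply_simple,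
      conjToggle_apply, rightInvSeq, count_cons]
    have hcond : (π ω * t * (π ω)⁻¹ = s i) ↔ ((π ω)⁻¹ * s i * π ω == t) = true := by
      rw [beq_iff_eq]
      constructor <;> intro h <;> rw [← h] <;> group
    refine Prod.ext ?_ ?_
    · simp only [mul_inv_rev, inv_simple]
      group
    · simp only [if_congr hcond rfl rfl, Nat.cast_add, Nat.cast_ite, Nat.cast_one, Nat.cast_zero,
        add_assoc]

theorem count_rightInvSeq_eq_of_wordProd_eq (hra : M.IsRightAngled) {ω ω' : List B}
    (h : π ω = π ω') (t : W) : ((ris ω).count t : ZMod 2) = (ris ω').count t := by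
  simpa [parityRep_wordProd_apply] using congrArg (fun w => (cs.parityRep hra w (t, 0)).2) h

end ParityRep

theorem simple_mem_rightInvSeq_of_isRightDescent (hra : M.IsRightAngled) {ω : List B} {i : B}
    (hi : cs.IsRightDescent (π ω) i) : s i ∈ ris ω := by
  classical
  obtain ⟨ρ, hρ, hρω⟩ := cs.exists_isReduced (π ω * s i)
  have hπ : π (ρ.concat i) = π ω := by
    rw [wordProd_concat, ← hρω, simple_mul_simple_cancel_right]
  have hρi : cs.IsReduced (ρ.concat i) := by
    rw [IsReduced, hπ, length_concat, ← hρ.eq, ← hρω, cs.isRightDescent_iff.mp hi]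
  have hcount : (ris (ρ.concat i)).count (s i) = 1 :=
    count_eq_one_of_mem hρi.nodup_rightInvSeq (by rw [rightInvSeq_concat]; simp)
  have hparity := cs.count_rightInvSeq_eq_of_wordProd_eq hra hπ (s i)
  rw [hcount, Nat.cast_one] at hparity
  by_contra hmem
  rw [count_eq_zero_of_not_mem hmem, Nat.cast_zero] at hparity
  exact zero_ne_one hparity.symm

theorem exists_wordProd_eraseIdx_eq_of_isRightDescent (hra : M.IsRightAngled) {ω : List B}
    {i : B} (hi : cs.IsRightDescent (π ω) i) :
    ∃ j < ω.length, π (ω.eraseIdx j) = π ω * s i := by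
  obtain ⟨j, hj, hget⟩ := mem_iff_getElem.mp (simple_mem_rightInvSeq_of_isRightDescent hra hi)
  refine ⟨j, by simpa using hj, ?_⟩
  rw [← wordProd_mul_getD_rightInvSeq, getD_eq_getElem _ _ hj, hget]

-- The letter deleted by the exchange property must lie in the reduced word for `u`,
-- since `v * s i` is longer than `v`.
theorem length_mul_mul_simple_mul_inv_lt (hra : M.IsRightAngled) {u v : W} {i : B}
    (huv : ℓ (u * v) = ℓ u + ℓ v) (hi : cs.IsRightDescent (u * v) i)
    (hv : ¬cs.IsRightDescent v i) : ℓ (u * v * s i * v⁻¹) < ℓ u := by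
  obtain ⟨ρ, hρ, rfl⟩ := cs.exists_isReduced u
  obtain ⟨β, hβ, rfl⟩ := cs.exists_isReduced v
  rw [← wordProd_append] at hi
  obtain ⟨j, hj, hdel⟩ := exists_wordProd_eraseIdx_eq_of_isRightDescent hra hi
  rw [length_append] at hj
  rcases lt_or_ge j ρ.length with hjρ | hjρ
  · rw [eraseIdx_append_of_lt_length hjρ, wordProd_append, wordProd_append] at hdel
    rw [← hdel, mul_inv_cancel_right, hρ.eq]
    calc ℓ (π (ρ.eraseIdx j)) ≤ (ρ.eraseIdx j).length := cs.length_wordProd_le _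
      _ < ρ.length := by rw [length_eraseIdx_of_lt hjρ]; omega
  · refine absurd ?_ hv
    rw [eraseIdx_append_of_length_le hjρ, wordProd_append, wordProd_append, mul_assoc] at hdel
    rw [IsRightDescent, ← mul_left_cancel hdel, hβ.eq]
    calc ℓ (π (β.eraseIdx (j - ρ.length))) ≤ (β.eraseIdx (j - ρ.length)).length :=
          cs.length_wordProd_le _
      _ < β.length := by rw [length_eraseIdx_of_lt (by omega)]; omega

theorem simple_injective (hra : M.IsRightAngled) : Function.Injective cs.simple := by
  classical
  intro i j hij
  let χ : W →* Multiplicative (ZMod 2) :=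
    cs.lift ⟨fun c => if c = i then Multiplicative.ofAdd 1 else 1,
      hra.isLiftable (fun c => by split_ifs <;> decide) (fun _ _ _ => Commute.all _ _)⟩
  have hχ := congrArg χ hij
  simp only [χ, lift_apply_simple] at hχ
  by_contra hne
  rw [if_neg (Ne.symm hne)] at hχ
  exact absurd hχ (by decide)

theorem isRightDescent_mul_simple (hra : M.IsRightAngled) {w : W} {i j : B} (hij : i ≠ j)
    (hi : cs.IsRightDescent w i) (hj : cs.IsRightDescent w j) :
    cs.IsRightDescent (w * s j) i := by
  have hwi := cs.isRightDescent_iff.mp hi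
  have hwj := cs.isRightDescent_iff.mp hj
  have hij' : ¬cs.IsRightDescent (s i) j := by
    rw [IsRightDescent, length_simple, Nat.lt_one_iff, length_eq_zero_iff,
      ← inv_simple, inv_mul_eq_one]
    exact fun h => hij (simple_injective hra h)
  have key := length_mul_mul_simple_mul_inv_lt hra (u := w * s i) (v := s i)
    (by rw [simple_mul_simple_cancel_right, length_simple, hwi])
    (by rwa [simple_mul_simple_cancel_right]) hij'
  rw [simple_mul_simple_cancel_right, inv_simple] at key
  rw [IsRightDescent]
  omega

section DihedralRep

variable (cs) [DecidableEq B]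

def dihedralRep (hra : M.IsRightAngled) {a b : B} (hab : M a b = 0) : W →* Equiv.Perm ℤ :=
  cs.lift ⟨fun c => if c = a then Equiv.subLeft (-1) else if c = b then Equiv.subLeft 1 else 1,
    hra.isLiftable (fun c => by split_ifs <;> ext <;> simp) fun c d hcd => by
      by_cases hc : c = a ∨ c = b
      · have hd : d ≠ a ∧ d ≠ b := by
          rcases hc with rfl | rfl <;> constructor <;> rintro rfl <;>
            simp_all [M.symmetric]
        simp only [if_neg hd.1, if_neg hd.2]
        exact Commute.one_right _
      · simp only [if_neg (not_or.mp hc).1, if_neg (not_or.mp hc).2]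
        exact Commute.one_left _⟩

theorem dihedralRep_simple (hra : M.IsRightAngled) {a b : B} (hab : M a b = 0) (c : B) :
    cs.dihedralRep hra hab (s c) =
      if c = a then Equiv.subLeft (-1) else if c = b then Equiv.subLeft 1 else 1 :=
  cs.lift_apply_simple _ c

theorem natAbs_dihedralRep_wordProd_apply_zero_le (hra : M.IsRightAngled) {a b : B}
    (hab : M a b = 0) (ω : List B) : (cs.dihedralRep hra hab (π ω) 0).natAbs ≤ ω.length := by
  induction ω with
  | nil => simp
  | cons i ω ih =>
    rw [wordProd_cons, map_mul, Equiv.Perm.mul_apply, dihedralRep_simple, length_cons]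
    split_ifs <;> simp <;> omega

theorem dihedralRep_wordProd_alternatingWord_apply_zero (hra : M.IsRightAngled) {a b : B}
    (hab : M a b = 0) (k : ℕ) :
    cs.dihedralRep hra hab (π (alternatingWord a b k)) 0 = if Even k then -(k : ℤ) else k := by
  have hba : b ≠ a := by rintro rfl; simp at hab
  induction k with
  | zero => simp [alternatingWord]
  | succ k ih =>
    rw [alternatingWord_succ', wordProd_cons, map_mul, Equiv.Perm.mul_apply, ih,
      dihedralRep_simple]
    by_cases hk : Even k <;> simp [hk, hba, Nat.even_add_one] <;> ring

end DihedralRep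

theorem isReduced_alternatingWord (hra : M.IsRightAngled) {a b : B} (hab : M a b = 0) (k : ℕ) :
    cs.IsReduced (alternatingWord a b k) := by
  classical
  obtain ⟨ω, hω, hπ⟩ := cs.exists_isReduced (π (alternatingWord a b k))
  refine le_antisymm (cs.length_wordProd_le _) ?_
  calc (alternatingWord a b k).length
      = (cs.dihedralRep hra hab (π (alternatingWord a b k)) 0).natAbs := by
        rw [dihedralRep_wordProd_alternatingWord_apply_zero]; split_ifs <;> simp
    _ ≤ ω.length := by rw [hπ]; exact cs.natAbs_dihedralRep_wordProd_apply_zero_le hra hab ω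
    _ = ℓ (π (alternatingWord a b k)) := by rw [hπ, hω.eq]

theorem length_mul_alternatingWord_add_le (hra : M.IsRightAngled) {a b : B} (hab : M a b = 0)
    {w : W} (ha : cs.IsRightDescent w a) (hb : cs.IsRightDescent w b) (k : ℕ) :
    ℓ (w * π (alternatingWord a b k)) + k ≤ ℓ w := by
  induction k with
  | zero => simp [alternatingWord]
  | succ k ih =>
    set u := w * π (alternatingWord a b k)
    set v := (π (alternatingWord a b k))⁻¹ with hv_def
    set d := if Even k then b else a with hd_def
    have huv : u * v = w := mul_inv_cancel_right _ _
    have hv : ℓ v ≤ k := by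
      simpa [hv_def] using cs.length_wordProd_le (alternatingWord a b k)
    have hlen : ℓ (u * v) = ℓ u + ℓ v := by
      have := cs.length_mul_le u v
      rw [huv] at this ⊢
      omega
    have hd : cs.IsRightDescent (u * v) d := by
      rw [huv, hd_def]; split_ifs <;> assumption
    have hvd : v * s d = (π (alternatingWord a b (k + 1)))⁻¹ := by
      rw [alternatingWord_succ', wordProd_cons, mul_inv_rev, inv_simple]
    have hd' : ¬cs.IsRightDescent v d := by
      rw [IsRightDescent, hvd, length_inv, (cs.isReduced_alternatingWord hra hab (k + 1)).eq,
        length_alternatingWord]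
      omega
    have key := length_mul_mul_simple_mul_inv_lt hra hlen hd hd'
    rw [huv, hv_def, inv_inv, mul_assoc, ← wordProd_cons, hd_def, ← alternatingWord_succ'] at key
    omega

theorem commute_simple_of_isRightDescent (hra : M.IsRightAngled) {w : W} {i j : B}
    (hij : i ≠ j) (hi : cs.IsRightDescent w i) (hj : cs.IsRightDescent w j) :
    Commute (s i) (s j) :=
  cs.commute_simple_of_eq_two <| (hra i j hij).resolve_right fun h => by
    have := length_mul_alternatingWord_add_le hra h hi hj (ℓ w + 1)
    omega

end CoxeterSystem

/-- First claim in the proof of Lemma 4.16 ('avoidlink'): if `γ₁ ++ γ₂` is a reduced word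
for `g` in a right-angled Coxeter system, then every right descent of `g` is either a letter
of `γ₂` or commutes with (and differs from) every letter of `γ₂`. -/
theorem descent_mem_or_link {B W : Type*} [Group W] {M : CoxeterMatrix B}
    (cs : CoxeterSystem M W) (hra : M.IsRightAngled) (g : W) (γ₁ γ₂ : List B)
    (hred : cs.IsReduced (γ₁ ++ γ₂)) (hg : cs.wordProd (γ₁ ++ γ₂) = g) :
    ∀ s : B, cs.IsRightDescent g s →
      s ∈ γ₂ ∨ ∀ a ∈ γ₂, a ≠ s ∧ Commute (cs.simple a) (cs.simple s) := by
  subst hg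
  induction γ₂ using List.reverseRecOn with
  | nil => exact fun _ _ => Or.inr (by simp)
  | append_singleton γ c ih =>
    intro t ht
    rw [← List.append_assoc] at hred ht
    by_cases htc : t = c
    · exact Or.inl (by simp [htc])
    have hc := cs.isRightDescent_wordProd_append_singleton hred
    have hcomm := CoxeterSystem.commute_simple_of_isRightDescent hra (Ne.symm htc) hc ht
    have ht' := CoxeterSystem.isRightDescent_mul_simple hra htc ht hc
    rw [cs.wordProd_append, cs.wordProd_singleton, cs.simple_mul_simple_cancel_right] at ht'
    rcases ih hred.of_append_left t ht' with h | h
    · exact Or.inl (List.mem_append_left _ h)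
    · refine Or.inr fun a ha => ?_
      rcases List.mem_append.mp ha with ha | ha
      · exact h a ha
      · rw [List.mem_singleton.mp ha]
        exact ⟨Ne.symm htc, hcomm⟩
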